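/- Every infinite countable subshift of finite type (SFT) X over a finite alphabet A contains a configuration c that admits exactly one direction of periodicity up to collinearity: there exists a nonzero v ∈ ℤ×ℤ with σ_v c = c, and every w ∈ ℤ×ℤ with σ_w c = c is linearly dependent with v. -/

import Mathlib

namespace CountableSubshift

/-- A configuration over alphabet `A` on the plane `ℤ × ℤ`. -/
abbrev Config (A : Type*) := ℤ × ℤ → A

variable {A : Type*}

/-- The shift by a vector `v`. -/
def shift (v : ℤ × ℤ) (x : Config A) : Config A := fun u => x (u + v)

/-- The shift-orbit of a configuration. -/
def orbit (x : Config A) : Set (Config A) := Set.range fun v => shift v x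

variable [TopologicalSpace A]

/-- `Preceq x y` iff `x` belongs to the closure of the shift-orbit of `y`. -/
def Preceq (x y : Config A) : Prop := x ∈ closure (orbit y)

/-- Strict version of `Preceq`. -/
def Prec (x y : Config A) : Prop := Preceq x y ∧ ¬ Preceq y x

/-- `x ≈ y` : mutual `Preceq`. -/
def OrbEquiv (x y : Config A) : Prop := Preceq x y ∧ Preceq y x

/-- A subshift: nonempty, closed and shift-invariant set of configurations. -/
def IsSubshift (X : Set (Config A)) : Prop :=
  X.Nonempty ∧ IsClosed X ∧ ∀ v : ℤ × ℤ, shift v '' X = X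

/-- A configuration is periodic if it has two linearly independent vectors of periodicity. -/
def Periodic (x : Config A) : Prop :=
  ∃ v w : ℤ × ℤ, shift v x = x ∧ shift w x = x ∧ LinearIndependent ℤ ![v, w]

/-- `x` is at level 0 in `X`: it is `Preceq`-minimal in `X`. -/
def Level0 (X : Set (Config A)) (x : Config A) : Prop :=
  x ∈ X ∧ ∀ y ∈ X, Preceq y x → Preceq x y

/-- `x` is at level 1 in `X`. -/
def Level1 (X : Set (Config A)) (x : Config A) : Prop :=
  x ∈ X ∧ ¬ Level0 X x ∧ ∀ y ∈ X, Prec y x → Level0 X y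

/-- `x` is at level 2 in `X`. -/
def Level2 (X : Set (Config A)) (x : Config A) : Prop :=
  x ∈ X ∧ ¬ Level0 X x ∧ ¬ Level1 X x ∧ ∀ y ∈ X, Prec y x → Level0 X y ∨ Level1 X y

/-- The pattern `p` with (finite) domain `D` appears in `x` at position `u`. -/
def AppearsAt (D : Finset (ℤ × ℤ)) (p : ℤ × ℤ → A) (x : Config A) (u : ℤ × ℤ) : Prop :=
  ∀ d ∈ D, x (u + d) = p d

/-- A subshift of finite type: the nonempty set of configurations avoiding a
finite family of forbidden patterns. -/
def IsSFT (X : Set (Config A)) : Prop :=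
  X.Nonempty ∧ ∃ (n : ℕ) (D : Fin n → Finset (ℤ × ℤ)) (p : Fin n → ℤ × ℤ → A),
    X = {x : Config A | ∀ (i : Fin n) (u : ℤ × ℤ), ¬ AppearsAt (D i) (p i) x u}

/-- Every pattern appearing in `c` appears at infinitely many positions. -/
def AllPatternsInfinite (c : Config A) : Prop :=
  ∀ (D : Finset (ℤ × ℤ)) (u : ℤ × ℤ),
    {u' : ℤ × ℤ | ∀ d ∈ D, c (u' + d) = c (u + d)}.Infinite

/-- The standard dot product on `ℤ × ℤ`. -/
def dot (u w : ℤ × ℤ) : ℤ := u.1 * w.1 + u.2 * w.2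

section Dev

variable [Fintype A] [DiscreteTopology A]

set_option linter.unusedSectionVars false

open Filter Set

lemma shift_apply (v : ℤ × ℤ) (x : Config A) (u : ℤ × ℤ) : shift v x u = x (u + v) := rfl

lemma shift_add (v w : ℤ × ℤ) (x : Config A) : shift (v + w) x = shift v (shift w x) := by
  funext u
  simp [shift, add_assoc]

lemma shift_zero (x : Config A) : shift 0 x = x := by funext u; simp [shift]

lemma shift_cancel (v : ℤ × ℤ) {x y : Config A} (h : shift v x = shift v y) : x = y := by
  have h2 := congrArg (shift (-v)) h
  rwa [← shift_add, ← shift_add, neg_add_cancel, shift_zero, shift_zero] at h2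

/-- The subgroup of periods of a configuration. -/
def periods (x : Config A) : AddSubgroup (ℤ × ℤ) where
  carrier := {v | shift v x = x}
  add_mem' := by
    intro a b ha hb
    simp only [Set.mem_setOf_eq] at *
    rw [shift_add, hb, ha]
  zero_mem' := shift_zero x
  neg_mem' := by
    intro a ha
    simp only [Set.mem_setOf_eq] at *
    conv_lhs => rw [← ha]
    rw [← shift_add, neg_add_cancel, shift_zero]

lemma mem_periods {x : Config A} {v : ℤ × ℤ} : v ∈ periods x ↔ shift v x = x := Iff.rfl

/-- Aperiodic configuration. -/
def Aper (x : Config A) : Prop := ∀ v : ℤ × ℤ, shift v x = x → v = 0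

/-- `x` has `(N,0)` and `(0,N)` as periods. -/
def Nper (N : ℤ) (x : Config A) : Prop := shift (N, 0) x = x ∧ shift (0, N) x = x

/-- Invariant set of configurations. -/
def Inv (K : Set (Config A)) : Prop := ∀ v : ℤ × ℤ, ∀ x ∈ K, shift v x ∈ K

lemma smul_pair (a : ℤ) (p : ℤ × ℤ) : a • p = (a * p.1, a * p.2) := rfl

lemma Nper.translate {N : ℤ} {x : Config A} (h : Nper N x) (a b : ℤ) :
    shift (a * N, b * N) x = x := by
  have h3 : ((a * N, b * N) : ℤ × ℤ) ∈ periods x := by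
    have h4 := (periods x).add_mem ((periods x).zsmul_mem h.1 a) ((periods x).zsmul_mem h.2 b)
    simpa [smul_pair, Prod.ext_iff] using h4
  exact h3

lemma Nper.point {N : ℤ} {x : Config A} (h : Nper N x) (a b : ℤ) (p : ℤ × ℤ) :
    x (p + (a * N, b * N)) = x p := by
  conv_rhs => rw [← h.translate a b]
  rfl

lemma Nper.shift {N : ℤ} {x : Config A} (h : Nper N x) (v : ℤ × ℤ) : Nper N (shift v x) := by
  constructor
  · rw [← shift_add, add_comm, shift_add, h.1]
  · rw [← shift_add, add_comm, shift_add, h.2]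

lemma Nper.mul {N : ℤ} {x : Config A} (h : Nper N x) (c : ℤ) : Nper (N * c) x := by
  constructor
  · have := h.translate c 0
    rw [mul_comm] at this
    simpa using this
  · have h3 : ((0, N * c) : ℤ × ℤ) ∈ periods x := by
      have h4 := (periods x).zsmul_mem h.2 c
      simpa [smul_pair, Prod.ext_iff, mul_comm] using h4
    exact h3

lemma det_ne_zero {v w : ℤ × ℤ} (h : LinearIndependent ℤ ![v, w]) :
    v.1 * w.2 - v.2 * w.1 ≠ 0 := by
  intro hd
  have hli := Fintype.linearIndependent_iff.mp h
  have hvne : v ≠ 0 := by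
    have := h.ne_zero 0
    simpa using this
  have s1 : ∑ i, (![w.2, -v.2]) i • (![v, w]) i = 0 := by
    simp only [Fin.sum_univ_two, Matrix.cons_val_zero, Matrix.cons_val_one, Matrix.head_cons,
      smul_pair, Prod.mk_add_mk, Prod.ext_iff, Prod.fst_zero, Prod.snd_zero]
    refine ⟨by linear_combination hd, by ring⟩
  have hz1 := hli _ s1
  have e1 : w.2 = 0 := by simpa using hz1 0
  have e2 : v.2 = 0 := by simpa using hz1 1
  have s2 : ∑ i, (![w.1, -v.1]) i • (![v, w]) i = 0 := by
    simp only [Fin.sum_univ_two, Matrix.cons_val_zero, Matrix.cons_val_one, Matrix.head_cons,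
      smul_pair, Prod.mk_add_mk, Prod.ext_iff, Prod.fst_zero, Prod.snd_zero]
    refine ⟨by ring, by rw [e1, e2] at hd ⊢; linear_combination hd⟩
  have hz2 := hli _ s2
  have e3 : v.1 = 0 := by simpa using hz2 1
  exact hvne (Prod.ext e3 e2)

lemma abs_fst_period {x : Config A} {a : ℤ} (h : ((a, 0) : ℤ × ℤ) ∈ periods x) :
    ((|a|, 0) : ℤ × ℤ) ∈ periods x := by
  rcases abs_cases a with ⟨e, _⟩ | ⟨e, _⟩
  · rwa [e]
  · rw [e]
    have h2 := (periods x).neg_mem h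
    have e2 : (-((a, 0) : ℤ × ℤ)) = ((-a, 0) : ℤ × ℤ) := by simp
    rwa [e2] at h2

lemma abs_snd_period {x : Config A} {b : ℤ} (h : ((0, b) : ℤ × ℤ) ∈ periods x) :
    ((0, |b|) : ℤ × ℤ) ∈ periods x := by
  rcases abs_cases b with ⟨e, _⟩ | ⟨e, _⟩
  · rwa [e]
  · rw [e]
    have h2 := (periods x).neg_mem h
    have e2 : (-((0, b) : ℤ × ℤ)) = ((0, -b) : ℤ × ℤ) := by simp
    rwa [e2] at h2

lemma nper_of_two_periods {x : Config A} {a b : ℤ} (ha : a ≠ 0) (hb : b ≠ 0)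
    (h1 : ((a, 0) : ℤ × ℤ) ∈ periods x) (h2 : ((0, b) : ℤ × ℤ) ∈ periods x) :
    ∃ N : ℤ, 1 ≤ N ∧ Nper N x := by
  have ha1 : (1 : ℤ) ≤ |a| := Int.one_le_abs ha
  have hb1 : (1 : ℤ) ≤ |b| := Int.one_le_abs hb
  refine ⟨|a| * |b|, by nlinarith, ?_, ?_⟩
  · have h4 := (periods x).zsmul_mem (abs_fst_period h1) |b|
    have e : (|b| • ((|a|, 0) : ℤ × ℤ)) = ((|a| * |b|, 0) : ℤ × ℤ) := by
      rw [smul_pair, Prod.ext_iff]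
      exact ⟨by ring, by ring⟩
    rwa [e] at h4
  · have h4 := (periods x).zsmul_mem (abs_snd_period h2) |a|
    have e : (|a| • ((0, |b|) : ℤ × ℤ)) = ((0, |a| * |b|) : ℤ × ℤ) := by
      rw [smul_pair, Prod.ext_iff]
      exact ⟨by ring, by ring⟩
    rwa [e] at h4

lemma nper_of_indep {z : Config A} {v w : ℤ × ℤ} (hv : shift v z = z) (hw : shift w z = z)
    (hind : LinearIndependent ℤ ![v, w]) : ∃ N : ℤ, 1 ≤ N ∧ Nper N z := by
  have hd := det_ne_zero hind
  have hvm : v ∈ periods z := hv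
  have hwm : w ∈ periods z := hw
  have h1 : ((v.1 * w.2 - v.2 * w.1, 0) : ℤ × ℤ) ∈ periods z := by
    have h4 := (periods z).add_mem ((periods z).zsmul_mem hvm w.2)
      ((periods z).neg_mem ((periods z).zsmul_mem hwm v.2))
    have e : (w.2 • v + -(v.2 • w)) = ((v.1 * w.2 - v.2 * w.1, 0) : ℤ × ℤ) := by
      simp only [smul_pair, Prod.neg_mk, Prod.mk_add_mk, Prod.ext_iff]
      exact ⟨by ring, by ring⟩
    rwa [e] at h4
  have h2 : ((0, v.1 * w.2 - v.2 * w.1) : ℤ × ℤ) ∈ periods z := by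
    have h4 := (periods z).add_mem ((periods z).zsmul_mem hwm v.1)
      ((periods z).neg_mem ((periods z).zsmul_mem hvm w.1))
    have e : (v.1 • w + -(w.1 • v)) = ((0, v.1 * w.2 - v.2 * w.1) : ℤ × ℤ) := by
      simp only [smul_pair, Prod.neg_mk, Prod.mk_add_mk, Prod.ext_iff]
      exact ⟨by ring, by ring⟩
    rwa [e] at h4
  exact nper_of_two_periods hd hd h1 h2

/-- max-norm -/
def nrm (p : ℤ × ℤ) : ℕ := max p.1.natAbs p.2.natAbs

lemma nrm_le_iff {p : ℤ × ℤ} {c : ℕ} : nrm p ≤ c ↔ p.1.natAbs ≤ c ∧ p.2.natAbs ≤ c := by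
  simp [nrm]

lemma ball_finite (c : ℕ) : {p : ℤ × ℤ | nrm p ≤ c}.Finite := by
  apply Set.Finite.subset ((Set.finite_Icc (-(c:ℤ)) c).prod (Set.finite_Icc (-(c:ℤ)) c))
  intro p hp
  rw [Set.mem_setOf_eq, nrm_le_iff] at hp
  constructor <;> simp [Set.mem_Icc] <;> omega

lemma ball_around_finite (u : ℤ × ℤ) (c : ℕ) : {p : ℤ × ℤ | nrm (p - u) ≤ c}.Finite := by
  have : {p : ℤ × ℤ | nrm (p - u) ≤ c} = (fun q => q + u) '' {p : ℤ × ℤ | nrm p ≤ c} := by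
    ext p
    simp only [Set.mem_setOf_eq, Set.mem_image]
    constructor
    · intro h; exact ⟨p - u, h, by ring⟩
    · rintro ⟨q, hq, rfl⟩; simpa using hq
  rw [this]
  exact (ball_finite c).image _

lemma isOpen_agreeF (f : ℤ × ℤ → A) {S : Set (ℤ × ℤ)} (hS : S.Finite) :
    IsOpen {w : Config A | ∀ p ∈ S, w p = f p} := by
  have he : {w : Config A | ∀ p ∈ S, w p = f p} = ⋂ p ∈ S, {w : Config A | w p = f p} := by
    ext w; simp
  rw [he]
  apply hS.isOpen_biInter
  intro p _
  have : IsOpen ((fun w : Config A => w p) ⁻¹' {f p}) :=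
    (isOpen_discrete _).preimage (continuous_apply p)
  simpa [Set.preimage] using this

lemma isClosed_agreeF (f : ℤ × ℤ → A) (S : Set (ℤ × ℤ)) :
    IsClosed {w : Config A | ∀ p ∈ S, w p = f p} := by
  have he : {w : Config A | ∀ p ∈ S, w p = f p} = ⋂ p ∈ S, {w : Config A | w p = f p} := by
    ext w; simp
  rw [he]
  apply isClosed_biInter
  intro p _
  have : IsClosed ((fun w : Config A => w p) ⁻¹' {f p}) :=
    (isClosed_discrete _).preimage (continuous_apply p)
  simpa [Set.preimage] using this

example : CompactSpace (Config A) := inferInstance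

lemma ulim {ι : Type} [Nonempty ι] (U : Ultrafilter ι) (f : ι → Config A) {K : Set (Config A)}
    (hK : IsClosed K) (hf : ∀ i, f i ∈ K) :
    ∃ z ∈ K, ∀ p : ℤ × ℤ, {i | f i p = z p} ∈ U := by
  have hcpt : IsCompact K := hK.isCompact
  have hle : (↑(U.map f) : Filter (Config A)) ≤ Filter.principal K := by
    rw [Filter.le_principal_iff]
    have : f ⁻¹' K = Set.univ := by
      ext i; simp [hf i]
    show K ∈ U.map f
    rw [Ultrafilter.mem_map, this]
    exact Filter.univ_mem
  obtain ⟨z, hzK, hz⟩ := hcpt.ultrafilter_le_nhds (U.map f) hle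
  refine ⟨z, hzK, fun p => ?_⟩
  have hO : IsOpen {w : Config A | w p = z p} := by
    have : IsOpen ((fun w : Config A => w p) ⁻¹' {z p}) :=
      (isOpen_discrete _).preimage (continuous_apply p)
    simpa [Set.preimage] using this
  have hmem : {w : Config A | w p = z p} ∈ nhds z := hO.mem_nhds rfl
  have := hz hmem
  rwa [Ultrafilter.mem_coe, Ultrafilter.mem_map] at this

lemma ultra_pigeon {ι β : Type*} (U : Ultrafilter ι) {f : ι → β} {t : Set β} (ht : t.Finite)
    (hf : ∀ i, f i ∈ t) : ∃ a ∈ t, {i | f i = a} ∈ U := by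
  have hmem : t ∈ U.map f := by
    rw [Ultrafilter.mem_map]
    have : f ⁻¹' t = Set.univ := by ext i; simp [hf i]
    rw [this]; exact Filter.univ_mem
  obtain ⟨a, hat, hpure⟩ := Ultrafilter.eq_pure_of_finite_mem ht hmem
  refine ⟨a, hat, ?_⟩
  have : {a} ∈ U.map f := by rw [hpure]; exact Filter.mem_pure.mpr rfl
  rw [Ultrafilter.mem_map] at this
  have he : f ⁻¹' {a} = {i | f i = a} := by ext i; simp
  rwa [he] at this

lemma iso_finite {K : Set (Config A)} (hcl : IsClosed K)
    (hiso : ∀ y ∈ K, ∃ n : ℕ, ∀ w ∈ K, (∀ p : ℤ × ℤ, nrm p ≤ n → w p = y p) → w = y) :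
    K.Finite := by
  classical
  choose! n hn using hiso
  have hopen : ∀ y ∈ K, IsOpen {w : Config A | ∀ p : ℤ × ℤ, nrm p ≤ n y → w p = y p} := by
    intro y _
    have := isOpen_agreeF (A := A) y (ball_finite (n y))
    simpa using this
  have hcover : K ⊆ ⋃ y ∈ K, {w : Config A | ∀ p : ℤ × ℤ, nrm p ≤ n y → w p = y p} :=
    fun w hw => Set.mem_biUnion hw (fun p _ => rfl)
  obtain ⟨t, htK, hfin, hsub⟩ := hcl.isCompact.elim_finite_subcover_image hopen hcover
  apply hfin.subset
  intro w hw
  obtain ⟨y, hyt, hwy⟩ := Set.mem_iUnion₂.mp (hsub hw)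
  have : w = y := hn y (htK hyt) w hw hwy
  rwa [this]

lemma exists_nonisolated {K : Set (Config A)} (hcl : IsClosed K) (hinf : K.Infinite) :
    ∃ y ∈ K, ∀ m : ℕ, ∃ w ∈ K, w ≠ y ∧ ∀ p : ℤ × ℤ, nrm p ≤ m → w p = y p := by
  by_contra hcon
  push_neg at hcon
  apply hinf
  apply iso_finite hcl
  intro y hy
  obtain ⟨m, hm⟩ := hcon y hy
  refine ⟨m, fun w hw hagree => ?_⟩
  by_contra hne
  obtain ⟨p, hp, hpe⟩ := hm w hw hne
  exact hpe (hagree p hp)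

lemma exists_isolated {K : Set (Config A)} (hcl : IsClosed K) (hcnt : K.Countable)
    (hne : K.Nonempty) :
    ∃ z ∈ K, ∃ m : ℕ, ∀ w ∈ K, (∀ p : ℤ × ℤ, nrm p ≤ m → w p = z p) → w = z := by
  haveI : CompactSpace K := isCompact_iff_compactSpace.mp hcl.isCompact
  haveI : LocallyCompactSpace K := inferInstance
  haveI : BaireSpace K := inferInstance
  haveI : Countable K := hcnt.to_subtype
  haveI : Nonempty K := hne.to_subtype
  have hU : (⋃ z : K, ({z} : Set K)) = Set.univ := by
    ext w; simp
  obtain ⟨z, hz⟩ := nonempty_interior_of_iUnion_of_closed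
    (fun z : K => (isClosed_singleton : IsClosed ({z} : Set K))) hU
  have hint : interior ({z} : Set K) = {z} := by
    apply Set.Subset.antisymm interior_subset
    obtain ⟨w, hw⟩ := hz
    have hww : w = z := Set.mem_singleton_iff.mp (interior_subset hw)
    intro u hu
    rw [Set.mem_singleton_iff] at hu
    rw [hu]
    rwa [hww] at hw
  have hopen : IsOpen ({z} : Set K) := by rw [← hint]; exact isOpen_interior
  obtain ⟨U, hUopen, hUeq⟩ := isOpen_induced_iff.mp hopen
  have hzU : (z : Config A) ∈ U := by
    have : z ∈ Subtype.val ⁻¹' U := by rw [hUeq]; rfl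
    exact this
  obtain ⟨I, u, hu, hsub⟩ := isOpen_pi_iff.mp hUopen z hzU
  refine ⟨z, z.2, I.sup (fun p => nrm p), fun w hw hagree => ?_⟩
  have hwU : w ∈ U := by
    apply hsub
    intro a ha
    have : w a = (z : Config A) a := hagree a (Finset.le_sup ha)
    rw [this]
    exact (hu a ha).2
  have : (⟨w, hw⟩ : K) ∈ Subtype.val ⁻¹' U := hwU
  rw [hUeq, Set.mem_singleton_iff] at this
  exact congrArg Subtype.val this

lemma nrm_add_le (p q : ℤ × ℤ) : nrm (p + q) ≤ nrm p + nrm q := by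
  have h1 := nrm_le_iff (p := p) (c := nrm p)
  have h2 := nrm_le_iff (p := q) (c := nrm q)
  rw [nrm_le_iff]
  simp only [Prod.fst_add, Prod.snd_add]
  have := h1.mp le_rfl
  have := h2.mp le_rfl
  omega

lemma continuous_shift (v : ℤ × ℤ) : Continuous (fun w : Config A => shift v w) := by
  apply continuous_pi
  intro u
  exact continuous_apply (u + v)

/-- orbit closure -/
def oc (x : Config A) : Set (Config A) := closure (orbit x)

lemma shift_mem_orbit (v : ℤ × ℤ) (x : Config A) : shift v x ∈ orbit x := ⟨v, rfl⟩

lemma x_mem_orbit (x : Config A) : x ∈ orbit x := ⟨0, shift_zero x⟩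

lemma orbit_subset_oc (x : Config A) : orbit x ⊆ oc x := subset_closure

lemma x_mem_oc (x : Config A) : x ∈ oc x := orbit_subset_oc x (x_mem_orbit x)

lemma oc_closed (x : Config A) : IsClosed (oc x) := isClosed_closure

lemma orbit_inv (x : Config A) (v : ℤ × ℤ) {w : Config A} (hw : w ∈ orbit x) :
    shift v w ∈ orbit x := by
  obtain ⟨u, rfl⟩ := hw
  exact ⟨v + u, shift_add v u x⟩

lemma orbit_inv_rev (x : Config A) (v : ℤ × ℤ) {w : Config A} (hw : shift v w ∈ orbit x) :
    w ∈ orbit x := by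
  obtain ⟨u, hu⟩ := hw
  simp only [] at hu
  have h2 : shift (-v) (shift u x) = shift (-v) (shift v w) := by rw [show shift u x = shift v w from hu]
  rw [← shift_add, ← shift_add, neg_add_cancel, shift_zero] at h2
  exact ⟨-v + u, h2⟩

lemma oc_inv (x : Config A) : Inv (oc x) := by
  intro v w hw
  have h1 : shift v w ∈ shift v '' oc x := ⟨w, hw, rfl⟩
  have h2 : shift v '' oc x ⊆ closure (shift v '' orbit x) :=
    image_closure_subset_closure_image (continuous_shift v)
  have h3 : shift v '' orbit x ⊆ orbit x := by
    rintro _ ⟨u, hu, rfl⟩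
    exact orbit_inv x v hu
  exact (closure_mono h3) (h2 h1)

lemma oc_subset_of_closed {X : Set (Config A)} (hXcl : IsClosed X) (hXinv : Inv X)
    {x : Config A} (hx : x ∈ X) : oc x ⊆ X := by
  apply closure_minimal _ hXcl
  rintro _ ⟨v, rfl⟩
  exact hXinv v x hx

lemma aper_shift_ne {x : Config A} (hx : Aper x) {a b : ℤ × ℤ} (hab : a ≠ b) :
    shift a x ≠ shift b x := by
  intro h
  have : shift (-b) (shift a x) = shift (-b) (shift b x) := by rw [h]
  rw [← shift_add, ← shift_add, neg_add_cancel, shift_zero] at this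
  exact hab (neg_add_eq_zero.mp (hx _ this)).symm

lemma iso_oc {x : Config A} (hcnt : (oc x).Countable) :
    ∃ m : ℕ, ∀ w ∈ oc x, (∀ p, nrm p ≤ m → w p = x p) → w = x := by
  obtain ⟨z, hzoc, m0, hm0⟩ := exists_isolated (oc_closed x) hcnt ⟨x, x_mem_oc x⟩
  have hO : IsOpen {w : Config A | ∀ p : ℤ × ℤ, nrm p ≤ m0 → w p = z p} := by
    have := isOpen_agreeF (A := A) z (ball_finite m0)
    simpa using this
  have hzO : z ∈ {w : Config A | ∀ p : ℤ × ℤ, nrm p ≤ m0 → w p = z p} := fun p _ => rfl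
  obtain ⟨y', hy'O, hy'orb⟩ := _root_.mem_closure_iff.mp hzoc _ hO hzO
  obtain ⟨v, rfl⟩ := hy'orb
  have hzv : shift v x = z := hm0 _ (orbit_subset_oc x (shift_mem_orbit v x)) hy'O
  refine ⟨m0 + nrm v, fun w hw hagree => ?_⟩
  have h1 : ∀ p : ℤ × ℤ, nrm p ≤ m0 → shift v w p = z p := by
    intro p hp
    rw [shift_apply, ← hzv, shift_apply]
    apply hagree
    calc nrm (p + v) ≤ nrm p + nrm v := nrm_add_le p v
      _ ≤ m0 + nrm v := by omega
  have h2 : shift v w ∈ oc x := oc_inv x v w hw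
  have h3 := hm0 _ h2 h1
  exact shift_cancel v (h3.trans hzv.symm)

lemma iso_oc_at {x : Config A} (hcnt : (oc x).Countable) (a : ℤ × ℤ) :
    ∃ m : ℕ, ∀ w ∈ oc x, (∀ p, nrm p ≤ m → w p = shift a x p) → w = shift a x := by
  obtain ⟨m, hm⟩ := iso_oc hcnt
  refine ⟨m + nrm a, fun w hw hagree => ?_⟩
  have h1 : ∀ p : ℤ × ℤ, nrm p ≤ m → shift (-a) w p = x p := by
    intro p hp
    rw [shift_apply]
    have he : w (p + -a) = shift a x (p + -a) := by
      apply hagree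
      calc nrm (p + -a) ≤ nrm p + nrm (-a) := nrm_add_le p (-a)
        _ ≤ m + nrm a := by
            have : nrm (-a) = nrm a := by simp [nrm]
            omega
    rw [he, shift_apply]
    congr 1
    ring
  have h2 := hm _ (oc_inv x (-a) w hw) h1
  have h3 := congrArg (shift a) h2
  rwa [← shift_add, add_neg_cancel, shift_zero] at h3

lemma mem_orbit_iff {x w : Config A} : w ∈ orbit x ↔ ∃ v, shift v x = w := by
  simp [orbit, Set.mem_range]

/-- The "limit set" part of the orbit closure. -/
def ocY (x : Config A) : Set (Config A) := oc x \ orbit x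

lemma ocY_inv (x : Config A) : Inv (ocY x) := by
  intro v w hw
  exact ⟨oc_inv x v w hw.1, fun hor => hw.2 (orbit_inv_rev x v hor)⟩

lemma ocY_closed {x : Config A} (hcnt : (oc x).Countable) : IsClosed (ocY x) := by
  apply isClosed_of_closure_subset
  intro w hw
  have hwoc : w ∈ oc x := by
    have h2 := closure_mono (Set.diff_subset : ocY x ⊆ oc x) hw
    rwa [IsClosed.closure_eq (oc_closed x)] at h2
  refine ⟨hwoc, ?_⟩
  intro hworb
  obtain ⟨a, ha⟩ := mem_orbit_iff.mp hworb
  obtain ⟨m, hm⟩ := iso_oc_at hcnt a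
  have hO : IsOpen {w' : Config A | ∀ p : ℤ × ℤ, nrm p ≤ m → w' p = shift a x p} := by
    simpa using isOpen_agreeF (A := A) (shift a x) (ball_finite m)
  rw [← ha] at hw
  obtain ⟨y', hy'O, hy'Y⟩ := _root_.mem_closure_iff.mp hw _ hO (fun p _ => rfl)
  have he : y' = shift a x := hm _ hy'Y.1 hy'O
  exact hy'Y.2 (he ▸ shift_mem_orbit a x)

lemma oc_subset_ocY {x : Config A} (hcnt : (oc x).Countable) {y : Config A}
    (hy : y ∈ ocY x) : oc y ⊆ ocY x := by
  have h1 : oc y ⊆ oc x := by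
    apply closure_minimal _ (oc_closed x)
    rintro _ ⟨v, rfl⟩
    exact oc_inv x v y hy.1
  intro w hw
  refine ⟨h1 hw, ?_⟩
  intro hworb
  obtain ⟨a, ha⟩ := mem_orbit_iff.mp hworb
  rw [← ha] at hw
  obtain ⟨m, hm⟩ := iso_oc_at hcnt a
  have hO : IsOpen {w' : Config A | ∀ p : ℤ × ℤ, nrm p ≤ m → w' p = shift a x p} := by
    simpa using isOpen_agreeF (A := A) (shift a x) (ball_finite m)
  obtain ⟨y', hy'O, hy'orb⟩ := _root_.mem_closure_iff.mp hw _ hO (fun p _ => rfl)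
  obtain ⟨b, hb⟩ := mem_orbit_iff.mp hy'orb
  have hy'oc : y' ∈ oc x := h1 (orbit_subset_oc y hy'orb)
  have he : y' = shift a x := hm _ hy'oc hy'O
  rw [← hb] at he
  have h2 : shift (-b) (shift b y) = shift (-b) (shift a x) := by rw [he]
  rw [← shift_add, ← shift_add, neg_add_cancel, shift_zero] at h2
  exact hy.2 ⟨-b + a, h2.symm⟩

lemma appears_shift {D : Finset (ℤ × ℤ)} {pt : ℤ × ℤ → A} {z : Config A} {v u : ℤ × ℤ} :
    AppearsAt D pt (shift v z) u ↔ AppearsAt D pt z (u + v) := by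
  unfold AppearsAt
  constructor <;> intro h d hd
  · rw [show u + v + d = u + d + v by ring, ← shift_apply v z]
    exact h d hd
  · rw [shift_apply, show u + d + v = u + v + d by ring]
    exact h d hd

/-- Abstract "SFT with window radius r" interface. -/
def IsSFTW (X : Set (Config A)) (r : ℕ) : Prop :=
  IsClosed X ∧ Inv X ∧
    ∀ z : Config A, (∀ u : ℤ × ℤ, ∃ (x' : Config A) (c : ℤ × ℤ), x' ∈ X ∧
      ∀ d : ℤ × ℤ, nrm d ≤ r → z (u + d) = x' (u + c + d)) → z ∈ X

lemma appears_isOpen {D : Finset (ℤ × ℤ)} {pt : ℤ × ℤ → A} (u : ℤ × ℤ) :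
    IsOpen {x : Config A | AppearsAt D pt x u} := by
  have he2 : {x : Config A | AppearsAt D pt x u}
      = {x : Config A | ∀ q ∈ (fun d => u + d) '' (D : Set (ℤ × ℤ)), x q = pt (q - u)} := by
    ext x
    simp only [Set.mem_setOf_eq, AppearsAt, Set.mem_image, Finset.mem_coe]
    constructor
    · rintro h q ⟨d, hd, rfl⟩
      rw [show u + d - u = d by ring]
      exact h d hd
    · intro h d hd
      have h3 := h (u + d) ⟨d, hd, rfl⟩
      rwa [show u + d - u = d by ring] at h3
  rw [he2]
  exact isOpen_agreeF _ ((D.finite_toSet).image _)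

lemma isSFT_isSFTW {X : Set (Config A)} {n : ℕ} {D : Fin n → Finset (ℤ × ℤ)}
    {pt : Fin n → ℤ × ℤ → A}
    (hXeq : X = {x : Config A | ∀ (i : Fin n) (u : ℤ × ℤ), ¬ AppearsAt (D i) (pt i) x u}) :
    ∃ r : ℕ, IsSFTW X r := by
  classical
  refine ⟨(Finset.univ : Finset (Fin n)).sup (fun i => (D i).sup nrm), ?_, ?_, ?_⟩
  · have he : X = ⋂ (i : Fin n), ⋂ (u : ℤ × ℤ),
        {x : Config A | AppearsAt (D i) (pt i) x u}ᶜ := by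
      rw [hXeq]; ext x; simp [Set.mem_iInter]
    rw [he]
    exact isClosed_iInter fun i => isClosed_iInter fun u => (appears_isOpen u).isClosed_compl
  · intro v x hx
    rw [hXeq] at hx
    rw [hXeq]
    intro i u happ
    exact hx i (u + v) (appears_shift.mp happ)
  · intro z hz
    rw [hXeq]
    intro i u happ
    obtain ⟨x', c, hx', hagree⟩ := hz u
    rw [hXeq] at hx'
    apply hx' i (u + c)
    intro d hd
    have hrd : nrm d ≤ (Finset.univ : Finset (Fin n)).sup (fun i => (D i).sup nrm) :=
      le_trans (Finset.le_sup hd) (Finset.le_sup (f := fun i => (D i).sup nrm) (Finset.mem_univ i))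
    rw [show u + c + d = u + c + d by ring, ← hagree d hrd]
    exact happ d hd

lemma nrm_lt_iff {p : ℤ × ℤ} {c : ℕ} : nrm p < c ↔ p.1.natAbs < c ∧ p.2.natAbs < c := by
  simp [nrm, Nat.max_lt]

lemma nrm_eq_zero {p : ℤ × ℤ} : nrm p = 0 ↔ p = 0 := by
  simp only [nrm, Nat.max_eq_zero_iff, Int.natAbs_eq_zero, Prod.ext_iff]
  rfl

/-- A "blunt cone" in direction `-e`. -/
def cone (e : ℤ × ℤ) : Set (ℤ × ℤ) :=
  {u | (e.1 ≠ 0 → e.1 * u.1 ≤ -1) ∧ (e.2 ≠ 0 → e.2 * u.2 ≤ -1)}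

def dirs : Finset (ℤ × ℤ) :=
  {(-1,-1),(-1,0),(-1,1),(0,-1),(0,1),(1,-1),(1,0),(1,1)}

lemma dirs_comp {e : ℤ × ℤ} (he : e ∈ dirs) :
    (e.1 = -1 ∨ e.1 = 0 ∨ e.1 = 1) ∧ (e.2 = -1 ∨ e.2 = 0 ∨ e.2 = 1) ∧ ¬(e.1 = 0 ∧ e.2 = 0) := by
  fin_cases he <;> simp

/-- `d` lies in the sector of direction `e`. -/
def Sec (e d : ℤ × ℤ) : Prop :=
  (e.1 ≠ 0 → (nrm d : ℤ) ≤ 2 * (e.1 * d.1)) ∧ (e.2 ≠ 0 → (nrm d : ℤ) ≤ 2 * (e.2 * d.2)) ∧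
  (e.1 = 0 → 2 * d.1.natAbs ≤ nrm d) ∧ (e.2 = 0 → 2 * d.2.natAbs ≤ nrm d)

lemma sec_def (a b : ℤ) (d : ℤ × ℤ) :
    Sec (a, b) d ↔ ((a ≠ 0 → (nrm d : ℤ) ≤ 2 * (a * d.1)) ∧ (b ≠ 0 → (nrm d : ℤ) ≤ 2 * (b * d.2)) ∧
      (a = 0 → 2 * d.1.natAbs ≤ nrm d) ∧ (b = 0 → 2 * d.2.natAbs ≤ nrm d)) := Iff.rfl

lemma sec_cover {d : ℤ × ℤ} (hd : d ≠ 0) : ∃ e ∈ dirs, Sec e d := by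
  have hm : 1 ≤ nrm d := by
    rcases Nat.eq_zero_or_pos (nrm d) with h | h
    · exact absurd (nrm_eq_zero.mp h) hd
    · omega
  have hmax : d.1.natAbs = nrm d ∨ d.2.natAbs = nrm d := by
    simp only [nrm]; omega
  have hd1 : d.1.natAbs ≤ nrm d := (nrm_le_iff.mp le_rfl).1
  have hd2 : d.2.natAbs ≤ nrm d := (nrm_le_iff.mp le_rfl).2
  by_cases c1 : 2 * d.1.natAbs < nrm d
  · have c2 : ¬ 2 * d.2.natAbs < nrm d := by rcases hmax with h | h <;> omega
    by_cases cpos : 0 < d.2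
    · refine ⟨(0, 1), by decide, ?_⟩
      rw [sec_def]
      exact ⟨fun h => by omega, fun h => by omega, fun h => by omega, fun h => by omega⟩
    · refine ⟨(0, -1), by decide, ?_⟩
      rw [sec_def]
      exact ⟨fun h => by omega, fun h => by omega, fun h => by omega, fun h => by omega⟩
  · by_cases cpos : 0 < d.1
    · by_cases c2 : 2 * d.2.natAbs < nrm d
      · refine ⟨(1, 0), by decide, ?_⟩
        rw [sec_def]
        exact ⟨fun h => by omega, fun h => by omega, fun h => by omega, fun h => by omega⟩
      · by_cases cpos2 : 0 < d.2
        · refine ⟨(1, 1), by decide, ?_⟩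
          rw [sec_def]
          exact ⟨fun h => by omega, fun h => by omega, fun h => by omega, fun h => by omega⟩
        · refine ⟨(1, -1), by decide, ?_⟩
          rw [sec_def]
          exact ⟨fun h => by omega, fun h => by omega, fun h => by omega, fun h => by omega⟩
    · by_cases c2 : 2 * d.2.natAbs < nrm d
      · refine ⟨(-1, 0), by decide, ?_⟩
        rw [sec_def]
        exact ⟨fun h => by omega, fun h => by omega, fun h => by omega, fun h => by omega⟩
      · by_cases cpos2 : 0 < d.2
        · refine ⟨(-1, 1), by decide, ?_⟩
          rw [sec_def]
          exact ⟨fun h => by omega, fun h => by omega, fun h => by omega, fun h => by omega⟩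
        · refine ⟨(-1, -1), by decide, ?_⟩
          rw [sec_def]
          exact ⟨fun h => by omega, fun h => by omega, fun h => by omega, fun h => by omega⟩

lemma sec_contain {e d u : ℤ × ℤ} (he : e ∈ dirs) (hs : Sec e d) (hu : u ∈ cone e)
    (hm : 2 * (nrm u + 1) ≤ nrm d) : nrm (u + d) < nrm d := by
  obtain ⟨he1, he2, _⟩ := dirs_comp he
  obtain ⟨hs1, hs2, hs3, hs4⟩ := hs
  obtain ⟨hc1, hc2⟩ := hu
  have hub1 : u.1.natAbs ≤ nrm u := (nrm_le_iff.mp le_rfl).1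
  have hub2 : u.2.natAbs ≤ nrm u := (nrm_le_iff.mp le_rfl).2
  have hdb1 : d.1.natAbs ≤ nrm d := (nrm_le_iff.mp le_rfl).1
  have hdb2 : d.2.natAbs ≤ nrm d := (nrm_le_iff.mp le_rfl).2
  rw [nrm_lt_iff]
  constructor
  · show (u.1 + d.1).natAbs < nrm d
    rcases he1 with h | h | h
    · have hc := hc1 (by rw [h]; omega)
      have hs' := hs1 (by rw [h]; omega)
      rw [h] at hc hs'
      omega
    · have hs' := hs3 h
      omega
    · have hc := hc1 (by rw [h]; omega)
      have hs' := hs1 (by rw [h]; omega)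
      rw [h] at hc hs'
      omega
  · show (u.2 + d.2).natAbs < nrm d
    rcases he2 with h | h | h
    · have hc := hc2 (by rw [h]; omega)
      have hs' := hs2 (by rw [h]; omega)
      rw [h] at hc hs'
      omega
    · have hs' := hs4 h
      omega
    · have hc := hc2 (by rw [h]; omega)
      have hs' := hs2 (by rw [h]; omega)
      rw [h] at hc hs'
      omega

lemma cone_escape {e : ℤ × ℤ} (he : e ∈ dirs) {N : ℤ} (hN : 1 ≤ N) (p : ℤ × ℤ) :
    ∃ a b : ℤ, ((p.1 + a * N, p.2 + b * N) : ℤ × ℤ) ∈ cone e := by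
  obtain ⟨he1, he2, _⟩ := dirs_comp he
  set k : ℤ := (p.1.natAbs : ℤ) + (p.2.natAbs : ℤ) + 1 with hk
  refine ⟨-k * e.1, -k * e.2, ?_, ?_⟩
  · intro hne
    have hsq : e.1 * e.1 = 1 := by rcases he1 with h | h | h <;> rw [h] <;> ring_nf <;> omega
    have hexp : e.1 * (p.1 + -k * e.1 * N) = e.1 * p.1 - k * N := by
      have : e.1 * (-k * e.1 * N) = -(k * N) * (e.1 * e.1) := by ring
      rw [mul_add, this, hsq]; ring
    rw [hexp]
    have h1 : e.1 * p.1 ≤ (p.1.natAbs : ℤ) := by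
      rcases he1 with h | h | h <;> rw [h] <;> omega
    have h2 : k ≤ k * N := by nlinarith
    omega
  · intro hne
    have hsq : e.2 * e.2 = 1 := by rcases he2 with h | h | h <;> rw [h] <;> ring_nf <;> omega
    have hexp : e.2 * (p.2 + -k * e.2 * N) = e.2 * p.2 - k * N := by
      have : e.2 * (-k * e.2 * N) = -(k * N) * (e.2 * e.2) := by ring
      rw [mul_add, this, hsq]; ring
    rw [hexp]
    have h1 : e.2 * p.2 ≤ (p.2.natAbs : ℤ) := by
      rcases he2 with h | h | h <;> rw [h] <;> omega
    have h2 : k ≤ k * N := by nlinarith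
    omega

lemma eq_of_agree_cone {e : ℤ × ℤ} (he : e ∈ dirs) {N : ℤ} (hN : 1 ≤ N) {z y : Config A}
    (hz : Nper N z) (hy : Nper N y) (hagree : ∀ q ∈ cone e, z q = y q) : z = y := by
  funext p
  obtain ⟨a, b, hq⟩ := cone_escape he hN p
  have e1 : z p = z (p + (a * N, b * N)) := (hz.point a b p).symm
  have e2 : y p = y (p + (a * N, b * N)) := (hy.point a b p).symm
  rw [e1, e2]
  exact hagree _ hq

lemma eq_of_agree_box {N : ℤ} (hN : 1 ≤ N) {z y : Config A} (hz : Nper N z) (hy : Nper N y)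
    (c : ℤ × ℤ)
    (hagree : ∀ q : ℤ × ℤ, c.1 ≤ q.1 → q.1 < c.1 + N → c.2 ≤ q.2 → q.2 < c.2 + N → z q = y q) :
    z = y := by
  funext p
  set q : ℤ × ℤ := (c.1 + (p.1 - c.1) % N, c.2 + (p.2 - c.2) % N) with hqdef
  set a : ℤ := (p.1 - c.1) / N with ha
  set b : ℤ := (p.2 - c.2) / N with hb
  have hNne : N ≠ 0 := by omega
  have hd1 := Int.mul_ediv_add_emod (p.1 - c.1) N
  have hd2 := Int.mul_ediv_add_emod (p.2 - c.2) N
  have hp : p = q + (a * N, b * N) := by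
    rw [Prod.ext_iff]
    constructor
    · show p.1 = c.1 + (p.1 - c.1) % N + a * N
      rw [ha]
      linarith [hd1]
    · show p.2 = c.2 + (p.2 - c.2) % N + b * N
      rw [hb]
      linarith [hd2]
  have hq1 : 0 ≤ (p.1 - c.1) % N := Int.emod_nonneg _ hNne
  have hq2 : (p.1 - c.1) % N < N := Int.emod_lt_of_pos _ (by omega)
  have hq3 : 0 ≤ (p.2 - c.2) % N := Int.emod_nonneg _ hNne
  have hq4 : (p.2 - c.2) % N < N := Int.emod_lt_of_pos _ (by omega)
  have hqc1 : q.1 = c.1 + (p.1 - c.1) % N := rfl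
  have hqc2 : q.2 = c.2 + (p.2 - c.2) % N := rfl
  rw [hp, hz.point a b q, hy.point a b q]
  exact hagree q (by omega) (by omega) (by omega) (by omega)

lemma wallpaper_unique {N : ℤ} (hN : 1 ≤ N) {s : ℕ} (hNs : N ≤ (s : ℤ)) {x g g' : Config A}
    (hg : Nper N g) (hg' : Nper N g') (u : ℤ × ℤ)
    (h1 : ∀ p, nrm (p - u) ≤ s → x p = g p) (h2 : ∀ p, nrm (p - u) ≤ s → x p = g' p) :
    g = g' := by
  apply eq_of_agree_box hN hg hg' u
  intro q a b c d
  have hball : nrm (q - u) ≤ s := by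
    rw [nrm_le_iff]
    constructor <;> simp only [Prod.fst_sub, Prod.snd_sub] <;> omega
  rw [← h1 q hball, ← h2 q hball]

lemma shift_mod {N : ℤ} (hN : 1 ≤ N) {y : Config A} (hNy : Nper N y) (v : ℤ × ℤ) :
    shift v y = shift (v.1 % N, v.2 % N) y := by
  have hsplit : v = ((v.1 / N) * N, (v.2 / N) * N) + (v.1 % N, v.2 % N) := by
    rw [Prod.ext_iff]
    refine ⟨?_, ?_⟩ <;> simp only [Prod.mk_add_mk, Prod.fst_add, Prod.snd_add]
    · linarith [Int.mul_ediv_add_emod v.1 N]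
    · linarith [Int.mul_ediv_add_emod v.2 N]
  conv_lhs => rw [hsplit]
  rw [add_comm, shift_add, hNy.translate]

lemma mod_pair_small {N : ℤ} (hN : 1 ≤ N) (v : ℤ × ℤ) :
    nrm (v.1 % N, v.2 % N) ≤ N.toNat := by
  have h1 : 0 ≤ v.1 % N := Int.emod_nonneg _ (by omega)
  have h2 : v.1 % N < N := Int.emod_lt_of_pos _ (by omega)
  have h3 : 0 ≤ v.2 % N := Int.emod_nonneg _ (by omega)
  have h4 : v.2 % N < N := Int.emod_lt_of_pos _ (by omega)
  rw [nrm_le_iff]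
  constructor <;> simp only [] <;> omega

lemma HP {K : Set (Config A)} (hcl : IsClosed K) (hinv : Inv K) {y : Config A} (hyK : y ∈ K)
    {N : ℤ} (hN : 1 ≤ N) (hNy : Nper N y)
    (hni : ∀ m : ℕ, ∃ w ∈ K, w ≠ y ∧ ∀ p : ℤ × ℤ, nrm p ≤ m → w p = y p) :
    ∃ z ∈ K, ∃ y' : Config A, Nper N y' ∧ ∃ e ∈ dirs,
      (∀ q ∈ cone e, z q = y' q) ∧ z 0 ≠ y' 0 := by
  classical
  choose w hwK hwne hwagree using hni
  have hdiff : ∀ m : ℕ, ∃ p : ℤ × ℤ, w m p ≠ y p := by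
    intro m
    by_contra hc
    push_neg at hc
    exact hwne m (funext hc)
  have hmin : ∀ m : ℕ, ∃ p : ℤ × ℤ, w m p ≠ y p ∧ ∀ q : ℤ × ℤ, nrm q < nrm p → w m q = y q := by
    intro m
    obtain ⟨p0, hp0⟩ := hdiff m
    have hne : ∃ n : ℕ, ∃ p : ℤ × ℤ, nrm p = n ∧ w m p ≠ y p := ⟨nrm p0, p0, rfl, hp0⟩
    obtain ⟨p, hpn, hpne⟩ := Nat.find_spec hne
    refine ⟨p, hpne, fun q hq => ?_⟩
    by_contra hqne
    exact Nat.find_min hne (show nrm q < Nat.find hne from hpn ▸ hq) ⟨q, rfl, hqne⟩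
  choose d hd hdmin using hmin
  have hdbig : ∀ m : ℕ, m < nrm (d m) := by
    intro m
    by_contra hc
    push_neg at hc
    exact hd m (hwagree m (d m) hc)
  have hdne : ∀ m, d m ≠ 0 := by
    intro m h
    have h2 := hdbig m
    rw [h] at h2
    simp [nrm] at h2
  have hsec : ∃ e ∈ dirs, {m : ℕ | Sec e (d m)}.Infinite := by
    by_contra hc
    push_neg at hc
    have hsub : (Set.univ : Set ℕ) ⊆ ⋃ e ∈ (dirs : Finset (ℤ × ℤ)), {m | Sec e (d m)} := by
      intro m _
      obtain ⟨e, he, hs⟩ := sec_cover (hdne m)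
      exact Set.mem_biUnion he hs
    have hfin : (⋃ e ∈ (dirs : Finset (ℤ × ℤ)), {m : ℕ | Sec e (d m)}).Finite :=
      Set.Finite.biUnion dirs.finite_toSet (fun e he => hc e he)
    exact Set.infinite_univ (hfin.subset hsub)
  obtain ⟨e, hedirs, hTinf⟩ := hsec
  haveI : Infinite {m : ℕ | Sec e (d m)} := hTinf.to_subtype
  set T := {m : ℕ | Sec e (d m)} with hT
  set U : Ultrafilter T := Filter.hyperfilter T with hU
  have hOSfin : ((fun v : ℤ × ℤ => shift v y) '' {v : ℤ × ℤ | nrm v ≤ N.toNat}).Finite :=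
    (ball_finite N.toNat).image _
  have hval : ∀ k : T, shift (d (k : ℕ)) y ∈
      (fun v : ℤ × ℤ => shift v y) '' {v : ℤ × ℤ | nrm v ≤ N.toNat} := by
    intro k
    rw [shift_mod hN hNy]
    exact ⟨_, mod_pair_small hN (d (k : ℕ)), rfl⟩
  obtain ⟨y', hy'OS, hUy'⟩ := ultra_pigeon U hOSfin hval
  have hy'Nper : Nper N y' := by
    obtain ⟨v, _, rfl⟩ := hy'OS
    exact hNy.shift v
  obtain ⟨z, hzK, hz⟩ := ulim U (fun k : T => shift (d (k : ℕ)) (w (k : ℕ))) hcl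
    (fun k => hinv _ _ (hwK _))
  have hcofin : ∀ B : ℕ, {k : T | B ≤ nrm (d (k : ℕ))} ∈ U := by
    intro B
    have hcompl : {k : T | B ≤ nrm (d (k : ℕ))}ᶜ.Finite := by
      apply Set.Finite.subset (Set.Finite.preimage (Set.injOn_of_injective Subtype.val_injective)
        (Set.finite_Iio B))
      intro k hk
      simp only [Set.mem_compl_iff, Set.mem_setOf_eq, not_le] at hk
      have := hdbig (k : ℕ)
      simp only [Set.mem_preimage, Set.mem_Iio]
      omega
    have : {k : T | B ≤ nrm (d (k : ℕ))} ∈ Filter.cofinite := by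
      rw [Filter.mem_cofinite]
      exact hcompl
    exact Filter.hyperfilter_le_cofinite this
  refine ⟨z, hzK, y', hy'Nper, e, hedirs, ?_, ?_⟩
  · intro q hq
    have h1 : {k : T | shift (d (k : ℕ)) (w (k : ℕ)) q = z q} ∈ U := hz q
    have h2 : {k : T | shift (d (k : ℕ)) y = y'} ∈ U := hUy'
    have h3 : {k : T | 2 * (nrm q + 1) ≤ nrm (d (k : ℕ))} ∈ U := hcofin _
    obtain ⟨k, hk⟩ := Filter.nonempty_of_mem
      (Filter.inter_mem (Filter.inter_mem h1 h2) h3)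
    obtain ⟨⟨hk1, hk2⟩, hk3⟩ := hk
    have hcont : nrm (q + d (k : ℕ)) < nrm (d (k : ℕ)) := sec_contain hedirs k.2 hq hk3
    have e1 : z q = w (k : ℕ) (q + d (k : ℕ)) := hk1.symm
    have e2 : w (k : ℕ) (q + d (k : ℕ)) = y (q + d (k : ℕ)) := hdmin (k : ℕ) _ hcont
    have e3 : y (q + d (k : ℕ)) = y' q := by rw [← hk2]; rfl
    rw [e1, e2, e3]
  · intro hzy
    have h1 : {k : T | shift (d (k : ℕ)) (w (k : ℕ)) 0 = z 0} ∈ U := hz 0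
    obtain ⟨k, hk⟩ := Filter.nonempty_of_mem (Filter.inter_mem h1 hUy')
    obtain ⟨hk1, hk2⟩ := hk
    apply hd (k : ℕ)
    have e1 : w (k : ℕ) (0 + d (k : ℕ)) = z 0 := hk1
    have e2 : y' 0 = y (0 + d (k : ℕ)) := by rw [← hk2]; rfl
    rw [zero_add] at e1 e2
    rw [e1, hzy, e2]

lemma nrm_neg (p : ℤ × ℤ) : nrm (-p) = nrm p := by simp [nrm]

/-- `x` matches some wallpaper from `G` on the `s`-ball around `u`. -/
def Good (G : Set (Config A)) (s : ℕ) (x : Config A) (u : ℤ × ℤ) : Prop :=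
  ∃ g ∈ G, ∀ p : ℤ × ℤ, nrm (p - u) ≤ s → x p = g p

lemma good_eq_adj {G : Set (Config A)} {N : ℤ} (hN : 1 ≤ N) (hGN : ∀ g ∈ G, Nper N g)
    {s : ℕ} (hNs : (N : ℤ) + 1 ≤ (s : ℤ)) {x : Config A} {u u' : ℤ × ℤ}
    (hstep : nrm (u' - u) ≤ 1) {g g' : Config A} (hg : g ∈ G) (hg' : g' ∈ G)
    (ha : ∀ p : ℤ × ℤ, nrm (p - u) ≤ s → x p = g p)
    (ha' : ∀ p : ℤ × ℤ, nrm (p - u') ≤ s → x p = g' p) : g = g' := by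
  have hs1 : 1 ≤ s := by omega
  apply wallpaper_unique hN (s := s - 1) (by push_cast; omega) (hGN g hg) (hGN g' hg') u
  · intro p hp
    exact ha p (by omega)
  · intro p hp
    apply ha' p
    have htri : nrm (p - u') ≤ nrm (p - u) + nrm (u - u') := by
      have he : p - u' = (p - u) + (u - u') := by ring
      rw [he]
      exact nrm_add_le _ _
    have hsym : nrm (u - u') = nrm (u' - u) := by
      rw [← nrm_neg (u - u')]
      congr 1
      ring
    omega

lemma good_all_const {G : Set (Config A)} {N : ℤ} (hN : 1 ≤ N) (hGN : ∀ g ∈ G, Nper N g)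
    {s : ℕ} (hNs : (N : ℤ) + 1 ≤ (s : ℤ)) {x : Config A}
    (hgood : ∀ u : ℤ × ℤ, Good G s x u) : ∃ g ∈ G, x = g := by
  classical
  choose gg hgg hagree using hgood
  have hstep : ∀ u u' : ℤ × ℤ, nrm (u' - u) ≤ 1 → gg u = gg u' :=
    fun u u' h => good_eq_adj hN hGN hNs h (hgg u) (hgg u') (hagree u) (hagree u')
  have hrow : ∀ b : ℤ, ∀ a : ℤ, gg (a, b) = gg (0, b) := by
    intro b
    intro a
    induction a using Int.induction_on with
    | zero => rfl
    | succ n ih => rw [← ih]; apply (hstep _ _ _).symm; rw [nrm_le_iff]; simp only [Prod.mk_sub_mk]; constructor <;> omega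
    | pred n ih => rw [← ih]; apply (hstep _ _ _).symm; rw [nrm_le_iff]; simp only [Prod.mk_sub_mk]; constructor <;> omega
  have hcol : ∀ b : ℤ, gg (0, b) = gg (0, 0) := by
    intro b
    induction b using Int.induction_on with
    | zero => rfl
    | succ n ih => rw [← ih]; apply (hstep _ _ _).symm; rw [nrm_le_iff]; simp only [Prod.mk_sub_mk]; constructor <;> omega
    | pred n ih => rw [← ih]; apply (hstep _ _ _).symm; rw [nrm_le_iff]; simp only [Prod.mk_sub_mk]; constructor <;> omega
  refine ⟨gg (0, 0), hgg (0, 0), ?_⟩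
  funext p
  have h1 : x p = gg p p := hagree p p (by simp [nrm])
  rw [h1, show p = (p.1, p.2) from rfl, hrow p.2 p.1, hcol p.2]

lemma good_off_const {G : Set (Config A)} {N : ℤ} (hN : 1 ≤ N) (hGN : ∀ g ∈ G, Nper N g)
    {s : ℕ} (hNs : (N : ℤ) + 1 ≤ (s : ℤ)) {x : Config A} {R : ℕ}
    (hgood : ∀ u : ℤ × ℤ, R < nrm u → Good G s x u) :
    ∃ g ∈ G, ∀ p : ℤ × ℤ, R < nrm p → x p = g p := by
  classical
  have hgood' : ∀ u : ℤ × ℤ, ∃ g : Config A, R < nrm u →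
      (g ∈ G ∧ ∀ p : ℤ × ℤ, nrm (p - u) ≤ s → x p = g p) := by
    intro u
    by_cases h : R < nrm u
    · obtain ⟨g, h1, h2⟩ := hgood u h
      exact ⟨g, fun _ => ⟨h1, h2⟩⟩
    · exact ⟨x, fun hc => absurd hc h⟩
  choose gg hgg using hgood'
  have hstep : ∀ u u' : ℤ × ℤ, R < nrm u → R < nrm u' → nrm (u' - u) ≤ 1 → gg u = gg u' :=
    fun u u' h h' hd => good_eq_adj hN hGN hNs hd (hgg u h).1 (hgg u' h').1
      ((hgg u h).2) ((hgg u' h').2)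
  -- vertical segments in a column with |a| > R
  have hvseg : ∀ a : ℤ, R < a.natAbs → ∀ t t' : ℤ, gg (a, t) = gg (a, t') := by
    intro a ha
    have hnr : ∀ t : ℤ, R < nrm (a, t) := by
      intro t
      have : a.natAbs ≤ nrm (a, t) := le_max_left _ _
      omega
    have haux : ∀ (k : ℕ) (t : ℤ), gg (a, t) = gg (a, t + k) := by
      intro k
      induction k with
      | zero => intro t; simp
      | succ n ih =>
        intro t
        rw [ih t]
        have := hstep (a, t + n) (a, t + (n + 1 : ℕ)) (hnr _) (hnr _)
          (by rw [nrm_le_iff]; simp only [Prod.mk_sub_mk]; constructor <;> push_cast <;> omega)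
        rw [← this]
    intro t t'
    rcases le_total t t' with h | h
    · have : t' = t + (t' - t).toNat := by omega
      rw [this]; exact haux _ t
    · have : t = t' + (t - t').toNat := by omega
      rw [this]; exact (haux _ t').symm
  have hhseg : ∀ b : ℤ, R < b.natAbs → ∀ t t' : ℤ, gg (t, b) = gg (t', b) := by
    intro b hb
    have hnr : ∀ t : ℤ, R < nrm (t, b) := by
      intro t
      have : b.natAbs ≤ nrm (t, b) := le_max_right _ _
      omega
    have haux : ∀ (k : ℕ) (t : ℤ), gg (t, b) = gg (t + k, b) := by
      intro k
      induction k with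
      | zero => intro t; simp
      | succ n ih =>
        intro t
        rw [ih t]
        have := hstep (t + n, b) (t + (n + 1 : ℕ), b) (hnr _) (hnr _)
          (by rw [nrm_le_iff]; simp only [Prod.mk_sub_mk]; constructor <;> push_cast <;> omega)
        rw [← this]
    intro t t'
    rcases le_total t t' with h | h
    · have : t' = t + (t' - t).toNat := by omega
      rw [this]; exact haux _ t
    · have : t = t' + (t - t').toNat := by omega
      rw [this]; exact (haux _ t').symm
  set c0 : ℤ × ℤ := ((R : ℤ) + 1, (R : ℤ) + 1) with hc0
  have hc0R : R < nrm c0 := by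
    have : ((R : ℤ) + 1).natAbs ≤ nrm c0 := le_max_left _ _
    omega
  have hconst : ∀ u : ℤ × ℤ, R < nrm u → gg u = gg c0 := by
    intro u hu
    have hcases : R < u.1.natAbs ∨ R < u.2.natAbs := by
      simp only [nrm] at hu; omega
    have hR1 : R < ((R : ℤ) + 1).natAbs := by omega
    rcases hcases with h | h
    · calc gg u = gg (u.1, u.2) := by rw [show u = (u.1, u.2) from rfl]
        _ = gg (u.1, (R : ℤ) + 1) := hvseg u.1 h u.2 _
        _ = gg ((R : ℤ) + 1, (R : ℤ) + 1) := hhseg ((R : ℤ) + 1) hR1 u.1 _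
        _ = gg c0 := rfl
    · calc gg u = gg (u.1, u.2) := by rw [show u = (u.1, u.2) from rfl]
        _ = gg ((R : ℤ) + 1, u.2) := hhseg u.2 h u.1 _
        _ = gg ((R : ℤ) + 1, (R : ℤ) + 1) := hvseg ((R : ℤ) + 1) hR1 u.2 _
        _ = gg c0 := rfl
  refine ⟨gg c0, (hgg c0 hc0R).1, ?_⟩
  intro p hp
  have h1 : x p = gg p p := (hgg p hp).2 p (by simp [nrm])
  rw [h1, hconst p hp]

lemma filter_ball_inter {ι : Type} (U : Ultrafilter ι) {f : ι → Config A} {z : Config A}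
    (hz : ∀ p : ℤ × ℤ, {i | f i p = z p} ∈ U) (s : ℕ) :
    {i | ∀ p : ℤ × ℤ, nrm p ≤ s → f i p = z p} ∈ U := by
  have he : {i | ∀ p : ℤ × ℤ, nrm p ≤ s → f i p = z p}
      = ⋂ p ∈ {q : ℤ × ℤ | nrm q ≤ s}, {i | f i p = z p} := by
    ext i; simp
  rw [he]
  exact (Filter.biInter_mem (ball_finite s)).mpr (fun p _ => hz p)

lemma nper_of_mem_finite_inv {Q : Set (Config A)} (hfin : Q.Finite) (hinv : Inv Q)
    {z : Config A} (hz : z ∈ Q) : ∃ N : ℤ, 1 ≤ N ∧ Nper N z := by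
  have hmaps1 : Set.MapsTo (fun k : ℤ => shift (k, 0) z) Set.univ Q :=
    fun k _ => hinv (k, 0) z hz
  obtain ⟨k, -, k', -, hkk, he⟩ := Set.infinite_univ.exists_ne_map_eq_of_mapsTo hmaps1 hfin
  have hmaps2 : Set.MapsTo (fun k : ℤ => shift (0, k) z) Set.univ Q :=
    fun k _ => hinv (0, k) z hz
  obtain ⟨l, -, l', -, hll, he2⟩ := Set.infinite_univ.exists_ne_map_eq_of_mapsTo hmaps2 hfin
  have hper1 : ((-k' + k, 0) : ℤ × ℤ) ∈ periods z := by
    have h2 : shift (-(k', 0)) (shift (k, 0) z) = shift (-(k', 0)) (shift (k', 0) z) := by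
      rw [he]
    rw [← shift_add, ← shift_add, neg_add_cancel, shift_zero] at h2
    have h3 : (-((k', 0) : ℤ × ℤ)) + (k, 0) = ((-k' + k, 0) : ℤ × ℤ) := by
      simp [Prod.ext_iff]
    rwa [h3] at h2
  have hper2 : ((0, -l' + l) : ℤ × ℤ) ∈ periods z := by
    have h2 : shift (-(0, l')) (shift (0, l) z) = shift (-(0, l')) (shift (0, l') z) := by
      rw [he2]
    rw [← shift_add, ← shift_add, neg_add_cancel, shift_zero] at h2
    have h3 : (-((0, l') : ℤ × ℤ)) + (0, l) = ((0, -l' + l) : ℤ × ℤ) := by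
      simp [Prod.ext_iff]
    rwa [h3] at h2
  exact nper_of_two_periods (by omega) (by omega) hper1 hper2

lemma common_nper {Q : Set (Config A)} (hfin : Q.Finite)
    (h : ∀ z ∈ Q, ∃ N : ℤ, 1 ≤ N ∧ Nper N z) :
    ∃ N : ℤ, 1 ≤ N ∧ ∀ z ∈ Q, Nper N z := by
  classical
  choose! Nf hNf1 hNf2 using h
  have hpos : (1 : ℤ) ≤ ∏ z ∈ hfin.toFinset, Nf z := by
    refine Finset.prod_induction Nf (fun t => 1 ≤ t) (fun a b ha hb => ?_) le_rfl ?_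
    · nlinarith
    · intro z hz
      exact hNf1 z (hfin.mem_toFinset.mp hz)
  refine ⟨∏ z ∈ hfin.toFinset, Nf z, hpos, ?_⟩
  intro z hz
  have hzin : z ∈ hfin.toFinset := hfin.mem_toFinset.mpr hz
  have he := Finset.mul_prod_erase _ Nf hzin
  rw [← he]
  exact (hNf2 z hz).mul _

lemma coreA {x : Config A} (hcnt : (oc x).Countable) (hap : Aper x) (s : ℕ) :
    {u : ℤ × ℤ | ¬ Good (ocY x) s x u}.Finite := by
  classical
  by_contra hinf
  haveI : Infinite {u : ℤ × ℤ | ¬ Good (ocY x) s x u} := Set.infinite_coe_iff.mpr hinf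
  set T := {u : ℤ × ℤ | ¬ Good (ocY x) s x u} with hT
  set U : Ultrafilter T := Filter.hyperfilter T with hU
  obtain ⟨z, hzoc, hz⟩ := ulim U (fun k : T => shift (k : ℤ × ℤ) x) (oc_closed x)
    (fun k => oc_inv x _ _ (x_mem_oc x))
  by_cases hzorb : z ∈ orbit x
  · obtain ⟨a, ha⟩ := mem_orbit_iff.mp hzorb
    obtain ⟨m, hm⟩ := iso_oc_at hcnt a
    have hmem : {k : T | ∀ p : ℤ × ℤ, nrm p ≤ m → shift (k : ℤ × ℤ) x p = z p} ∈ U :=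
      filter_ball_inter U hz m
    have hsub : {k : T | ∀ p : ℤ × ℤ, nrm p ≤ m → shift (k : ℤ × ℤ) x p = z p}
        ⊆ {k : T | (k : ℤ × ℤ) = a} := by
      intro k hk
      have hag : ∀ p : ℤ × ℤ, nrm p ≤ m → shift (k : ℤ × ℤ) x p = shift a x p := by
        intro p hp
        rw [hk p hp, ← ha]
      have h2 := hm _ (oc_inv x _ _ (x_mem_oc x)) hag
      show (k : ℤ × ℤ) = a
      by_contra hne
      exact aper_shift_ne hap hne h2
    have hfinset : {k : T | (k : ℤ × ℤ) = a}.Finite := by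
      apply Set.Finite.preimage (Set.injOn_of_injective Subtype.val_injective)
        (Set.finite_singleton a)
    exact absurd hmem (Filter.notMem_hyperfilter_of_finite (hfinset.subset hsub))
  · have hzY : z ∈ ocY x := ⟨hzoc, hzorb⟩
    have hmem : {k : T | ∀ p : ℤ × ℤ, nrm p ≤ s → shift (k : ℤ × ℤ) x p = z p} ∈ U :=
      filter_ball_inter U hz s
    obtain ⟨k, hk⟩ := Filter.nonempty_of_mem hmem
    apply k.2
    refine ⟨shift (-(k : ℤ × ℤ)) z, ocY_inv x _ _ hzY, ?_⟩
    intro p hp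
    have h1 : shift (k : ℤ × ℤ) x (p - (k : ℤ × ℤ)) = z (p - (k : ℤ × ℤ)) := hk _ hp
    have h2 : shift (k : ℤ × ℤ) x (p - (k : ℤ × ℤ)) = x p := by
      rw [shift_apply]; congr 1; ring
    have h3 : shift (-(k : ℤ × ℤ)) z p = z (p - (k : ℤ × ℤ)) := by
      rw [shift_apply, sub_eq_add_neg]
    rw [← h2, h1, ← h3]

lemma INF {X : Set (Config A)}
    (H : ∀ z ∈ X, Aper z ∨ ∃ N : ℤ, 1 ≤ N ∧ Nper N z)
    {K : Set (Config A)} (hKX : K ⊆ X) (hcl : IsClosed K) (hinv : Inv K)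
    (hinf : K.Infinite) : ∃ z ∈ K, Aper z := by
  obtain ⟨y, hyK, hni⟩ := exists_nonisolated hcl hinf
  rcases H y (hKX hyK) with hap | ⟨N, hN, hNy⟩
  · exact ⟨y, hyK, hap⟩
  obtain ⟨z, hzK, y', hy'N, e, he, hagree, hne0⟩ := HP hcl hinv hyK hN hNy hni
  refine ⟨z, hzK, ?_⟩
  rcases H z (hKX hzK) with hap | ⟨Nz, hNz, hNzz⟩
  · exact hap
  · exfalso
    have hcommon1 : Nper (N * Nz) z := by
      have h2 := hNzz.mul N
      rwa [mul_comm] at h2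
    have hcommon2 : Nper (N * Nz) y' := hy'N.mul Nz
    have h3 := eq_of_agree_cone he (by nlinarith) hcommon1 hcommon2 hagree
    rw [h3] at hne0
    exact hne0 rfl

lemma nrm_fst_le (q : ℤ × ℤ) : q.1.natAbs ≤ nrm q := le_max_left _ _

lemma nrm_snd_le (q : ℤ × ℤ) : q.2.natAbs ≤ nrm q := le_max_right _ _

lemma sep_lemma {M : ℤ} (hM : 0 < M) {k k' : ℤ} (hkk : k ≠ k') :
    M.natAbs ≤ ((k - k') * M).natAbs := by
  rw [Int.natAbs_mul]
  exact Nat.le_mul_of_pos_left _ (by omega)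

lemma coreC {X : Set (Config A)} {r : ℕ} (hS : IsSFTW X r) (hcnt : X.Countable)
    {x g : Config A} (hx : x ∈ X) {N : ℤ} (hN : 1 ≤ N) (hg : Nper N g)
    {R : ℕ} (hoff : ∀ p : ℤ × ℤ, R < nrm p → x p = g p) (hne : x ≠ g) : False := by
  classical
  obtain ⟨b0, hb0⟩ : ∃ p, x p ≠ g p := by
    by_contra hc; push_neg at hc; exact hne (funext hc)
  have hb0R : nrm b0 ≤ R := by
    by_contra hc; push_neg at hc; exact hb0 (hoff b0 hc)
  set c : ℤ := 2 * R + 4 * r + 5 with hcdef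
  set M : ℤ := N * c with hM
  have hcpos : (0 : ℤ) < c := by rw [hcdef]; positivity
  have hMc : c ≤ M := by rw [hM]; nlinarith
  have hMpos : 0 < M := by omega
  have hMnat : 2 * R + 4 * r + 5 ≤ M.natAbs := by
    have : (2 * R + 4 * r + 5 : ℤ) ≤ M := by rw [hcdef] at hMc; push_cast at hMc ⊢; omega
    omega
  have hgM : ∀ (k : ℤ) (p : ℤ × ℤ), g (p + (k * M, 0)) = g p := by
    intro k p
    have h2 := hg.point (k * c) 0 p
    have he : ((k * c * N, 0 * N) : ℤ × ℤ) = ((k * M, 0) : ℤ × ℤ) := by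
      rw [Prod.ext_iff]
      constructor
      · show k * c * N = k * M
        rw [hM]; ring
      · simp
    rwa [he] at h2
  set xS : Set ℤ → Config A := fun S p =>
    if h : ∃ k, k ∈ S ∧ nrm (p - (k * M, 0)) ≤ R then x (p - (h.choose * M, 0)) else g p
    with hxS
  have huniq : ∀ (p : ℤ × ℤ) (k k' : ℤ), nrm (p - (k * M, 0)) ≤ R →
      nrm (p - (k' * M, 0)) ≤ R → k = k' := by
    intro p k k' h1 h2
    by_contra hkk
    have e1 : (p.1 - k * M).natAbs ≤ R := by
      have h3 := nrm_fst_le (p - (k * M, 0))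
      simp only [Prod.fst_sub] at h3
      omega
    have e2 : (p.1 - k' * M).natAbs ≤ R := by
      have h3 := nrm_fst_le (p - (k' * M, 0))
      simp only [Prod.fst_sub] at h3
      omega
    have h3 := sep_lemma hMpos hkk
    have h4 : (k - k') * M = (p.1 - k' * M) - (p.1 - k * M) := by ring
    rw [h4] at h3
    omega
  have E1 : ∀ (S : Set ℤ) (p : ℤ × ℤ) (k : ℤ), k ∈ S → nrm (p - (k * M, 0)) ≤ R →
      xS S p = x (p - (k * M, 0)) := by
    intro S p k hk hnear
    have hex : ∃ k, k ∈ S ∧ nrm (p - (k * M, 0)) ≤ R := ⟨k, hk, hnear⟩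
    rw [hxS]
    simp only
    rw [dif_pos hex]
    have hspec := hex.choose_spec
    rw [huniq p _ k hspec.2 hnear]
  have E2 : ∀ (S : Set ℤ) (p : ℤ × ℤ), (∀ k ∈ S, R < nrm (p - (k * M, 0))) →
      xS S p = g p := by
    intro S p hfar
    rw [hxS]
    simp only
    rw [dif_neg]
    rintro ⟨k, hk, hnear⟩
    exact absurd hnear (not_le.mpr (hfar k hk))
  have hmem : ∀ S : Set ℤ, xS S ∈ X := by
    intro S
    apply hS.2.2
    intro u
    by_cases hcase : ∃ k ∈ S, nrm (u - (k * M, 0)) ≤ R + 2 * r + 2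
    · obtain ⟨k, hk, hknear⟩ := hcase
      refine ⟨x, (-(k * M), 0), hx, fun d hd => ?_⟩
      have hargeq : u + (-(k * M), 0) + d = (u + d) - ((k * M : ℤ), (0 : ℤ)) := by
        rw [Prod.ext_iff]
        constructor
        · simp only [Prod.fst_add, Prod.fst_sub]
          ring
        · simp only [Prod.snd_add, Prod.snd_sub]
          ring
      rw [hargeq]
      by_cases hpn : nrm ((u + d) - (k * M, 0)) ≤ R
      · exact E1 S (u + d) k hk hpn
      · push_neg at hpn
        have hfar : ∀ k' ∈ S, R < nrm ((u + d) - (k' * M, 0)) := by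
          intro k' hk'
          by_cases hke : k' = k
          · rw [hke]; exact hpn
          · have hU1 : (u.1 - k * M).natAbs ≤ R + 2 * r + 2 := by
              have h3 := nrm_fst_le (u - (k * M, 0))
              simp only [Prod.fst_sub] at h3
              omega
            have hd1 : d.1.natAbs ≤ r := (nrm_le_iff.mp hd).1
            have hsep := sep_lemma hMpos (show k ≠ k' from fun hh => hke hh.symm)
            have hrel : (k - k') * M = ((u.1 + d.1) - k' * M) - ((u.1 + d.1) - k * M) := by
              ring
            rw [hrel] at hsep
            have h4 := nrm_fst_le ((u + d) - (k' * M, 0))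
            simp only [Prod.fst_sub, Prod.fst_add] at h4
            omega
        rw [E2 S (u + d) hfar]
        have hper : g ((u + d) - ((k * M : ℤ), (0 : ℤ))) = g (u + d) := by
          have h5 := hgM (-k) (u + d)
          have he2 : (u + d) + ((-k) * M, 0) = (u + d) - ((k * M : ℤ), (0 : ℤ)) := by
            rw [Prod.ext_iff]
            constructor
            · simp only [Prod.fst_add, Prod.fst_sub]; ring
            · simp only [Prod.snd_add, Prod.snd_sub]; ring
          rwa [he2] at h5
        rw [← hper]
        exact (hoff _ hpn).symm
    · push_neg at hcase
      set L : ℤ := (nrm u : ℤ) + R + r + 2 with hL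
      refine ⟨x, ((L * N : ℤ), (0 : ℤ)), hx, fun d hd => ?_⟩
      have hfar : ∀ k' ∈ S, R < nrm ((u + d) - (k' * M, 0)) := by
        intro k' hk'
        have h1 := hcase k' hk'
        have hcomp : R + 2 * r + 2 < (u.1 - k' * M).natAbs ∨ R + 2 * r + 2 < u.2.natAbs := by
          have h2 : (u - ((k' * M : ℤ), (0 : ℤ))).1 = u.1 - k' * M := by
            simp only [Prod.fst_sub]
          have h3 : (u - ((k' * M : ℤ), (0 : ℤ))).2 = u.2 := by
            simp only [Prod.snd_sub]; ring
          have h4 : nrm (u - (k' * M, 0)) = max (u.1 - k' * M).natAbs u.2.natAbs := by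
            rw [show nrm (u - ((k' * M : ℤ), (0 : ℤ)))
              = max ((u - ((k' * M : ℤ), (0 : ℤ))).1).natAbs
                ((u - ((k' * M : ℤ), (0 : ℤ))).2).natAbs from rfl, h2, h3]
          rw [h4] at h1
          omega
        have hd1 : d.1.natAbs ≤ r := (nrm_le_iff.mp hd).1
        have hd2 : d.2.natAbs ≤ r := (nrm_le_iff.mp hd).2
        have h5 := nrm_fst_le ((u + d) - (k' * M, 0))
        have h6 := nrm_snd_le ((u + d) - (k' * M, 0))
        simp only [Prod.fst_sub, Prod.fst_add, Prod.snd_sub, Prod.snd_add] at h5 h6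
        rcases hcomp with h | h
        · omega
        · omega
      rw [E2 S (u + d) hfar]
      have hargeq : u + ((L * N : ℤ), (0 : ℤ)) + d = (u + d) + ((L * N : ℤ), (0 : ℤ)) := by
        rw [Prod.ext_iff]
        constructor
        · simp only [Prod.fst_add]; ring
        · simp only [Prod.snd_add]; ring
      rw [hargeq]
      have hu1 : u.1.natAbs ≤ nrm u := nrm_fst_le u
      have hd1 : d.1.natAbs ≤ r := (nrm_le_iff.mp hd).1
      have hLN : (nrm u : ℤ) + R + r + 2 ≤ L * N := by
        have hL0 : (0 : ℤ) ≤ L := by rw [hL]; positivity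
        nlinarith
      have hfar2 : R < nrm ((u + d) + ((L * N : ℤ), (0 : ℤ))) := by
        have h5 := nrm_fst_le ((u + d) + ((L * N : ℤ), (0 : ℤ)))
        simp only [Prod.fst_add] at h5
        omega
      rw [hoff _ hfar2]
      have h6 := hg.point L 0 (u + d)
      simp only [zero_mul] at h6
      exact h6.symm
  -- injectivity
  have hval1 : ∀ (S : Set ℤ) (k : ℤ), k ∈ S → xS S (b0 + (k * M, 0)) = x b0 := by
    intro S k hk
    have hb : nrm ((b0 + (k * M, 0)) - ((k * M : ℤ), (0 : ℤ))) ≤ R := by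
      have he : (b0 + ((k * M : ℤ), (0 : ℤ))) - ((k * M : ℤ), (0 : ℤ)) = b0 := by
        rw [Prod.ext_iff]
        constructor
        · simp only [Prod.fst_add, Prod.fst_sub]; ring
        · simp only [Prod.snd_add, Prod.snd_sub]; ring
      rw [he]
      exact hb0R
    rw [E1 S _ k hk hb]
    congr 1
    rw [Prod.ext_iff]
    constructor
    · simp only [Prod.fst_add, Prod.fst_sub]; ring
    · simp only [Prod.snd_add, Prod.snd_sub]; ring
  have hval2 : ∀ (S : Set ℤ) (k : ℤ), k ∉ S → xS S (b0 + (k * M, 0)) = g b0 := by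
    intro S k hk
    have hfar : ∀ k' ∈ S, R < nrm ((b0 + (k * M, 0)) - (k' * M, 0)) := by
      intro k' hk'
      have hke : k ≠ k' := fun h => hk (h ▸ hk')
      have hb1 : b0.1.natAbs ≤ R := by
        have := nrm_fst_le b0; omega
      have hsep := sep_lemma hMpos hke
      have hrel : (k - k') * M = (b0.1 + k * M - k' * M) - b0.1 := by ring
      rw [hrel] at hsep
      have h5 := nrm_fst_le ((b0 + (k * M, 0)) - (k' * M, 0))
      simp only [Prod.fst_sub, Prod.fst_add] at h5
      omega
    rw [E2 S _ hfar]
    exact hgM k b0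
  have hinj : Function.Injective xS := by
    intro S S' hSS'
    ext k
    constructor
    · intro hk
      by_contra hk'
      have v1 := hval1 S k hk
      have v2 := hval2 S' k hk'
      rw [hSS'] at v1
      rw [v1] at v2
      exact hb0 v2
    · intro hk
      by_contra hk'
      have v1 := hval1 S' k hk
      have v2 := hval2 S k hk'
      rw [← hSS'] at v1
      rw [v1] at v2
      exact hb0 v2
  have hrange : Set.range xS ⊆ X := by
    rintro w ⟨S, rfl⟩
    exact hmem S
  have hcnt2 : (Set.range xS).Countable := hcnt.mono hrange
  obtain ⟨f, hf⟩ := Set.countable_iff_exists_injective.mp hcnt2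
  have hinj2 : Function.Injective
      (fun S : Set ℤ => ((f ⟨xS S, Set.mem_range_self S⟩ : ℕ) : ℤ)) := by
    intro S S' h
    apply hinj
    have h2 : f ⟨xS S, Set.mem_range_self S⟩ = f ⟨xS S', Set.mem_range_self S'⟩ := by
      have h1 : ((f ⟨xS S, Set.mem_range_self S⟩ : ℕ) : ℤ)
          = ((f ⟨xS S', Set.mem_range_self S'⟩ : ℕ) : ℤ) := h
      exact_mod_cast h1
    have h3 := hf h2
    exact congrArg Subtype.val h3
  exact Function.cantor_injective _ hinj2

lemma main_false {X : Set (Config A)} {r : ℕ} (hS : IsSFTW X r) (hcnt : X.Countable)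
    (hinf : X.Infinite)
    (H : ∀ z ∈ X, Aper z ∨ ∃ N : ℤ, 1 ≤ N ∧ Nper N z) : False := by
  classical
  set F : Set (Set (Config A)) :=
    {K | K ⊆ X ∧ IsClosed K ∧ Inv K ∧ ∃ z ∈ K, Aper z} with hF
  have hXF : X ∈ F :=
    ⟨subset_rfl, hS.1, hS.2.1, INF H subset_rfl hS.1 hS.2.1 hinf⟩
  have hchain : ∀ c ⊆ F, IsChain (· ⊆ ·) c → c.Nonempty →
      ∃ lb ∈ F, ∀ K ∈ c, lb ⊆ K := by
    intro c hcF hch hcne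
    set Q := ⋂₀ c with hQ
    have hQsub : Q ⊆ X := by
      obtain ⟨K0, hK0⟩ := hcne
      exact (Set.sInter_subset_of_mem hK0).trans (hcF hK0).1
    have hQcl : IsClosed Q := isClosed_sInter (fun K hK => (hcF hK).2.1)
    have hQinv : Inv Q := by
      intro v z hz
      exact Set.mem_sInter.mpr (fun K hK => (hcF hK).2.2.1 v z (Set.mem_sInter.mp hz K hK))
    haveI : Nonempty ↥c := hcne.to_subtype
    have hQne : Q.Nonempty := by
      apply IsCompact.nonempty_sInter_of_directed_nonempty_isCompact_isClosed
      · intro K1 hK1 K2 hK2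
        rcases hch.total hK1 hK2 with h | h
        · exact ⟨K1, hK1, subset_rfl, h⟩
        · exact ⟨K2, hK2, h, subset_rfl⟩
      · intro K hK
        obtain ⟨z, hz, -⟩ := (hcF hK).2.2.2
        exact ⟨z, hz⟩
      · intro K hK
        exact (hcF hK).2.1.isCompact
      · intro K hK
        exact (hcF hK).2.1
    by_cases hQinf : Q.Infinite
    · exact ⟨Q, ⟨hQsub, hQcl, hQinv, INF H hQsub hQcl hQinv hQinf⟩,
        fun K hK => Set.sInter_subset_of_mem hK⟩
    · exfalso
      rw [Set.not_infinite] at hQinf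
      have hQper : ∀ z ∈ Q, ∃ N : ℤ, 1 ≤ N ∧ Nper N z :=
        fun z hz => nper_of_mem_finite_inv hQinf hQinv hz
      obtain ⟨N, hN, hNall⟩ := common_nper hQinf hQper
      set s : ℕ := N.toNat + 1 with hs
      have hNs : (N : ℤ) + 1 ≤ (s : ℤ) := by rw [hs]; push_cast; omega
      set Uo : Set (Config A) :=
        ⋃ z ∈ Q, {w : Config A | ∀ p : ℤ × ℤ, nrm p ≤ s → w p = z p} with hUo
      have hUo_open : IsOpen Uo := by
        apply isOpen_biUnion
        intro z _
        have := isOpen_agreeF (A := A) z (ball_finite s)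
        simpa using this
      have hQU : Q ⊆ Uo := fun z hz => Set.mem_biUnion hz (fun p _ => rfl)
      have hKU : ∃ K ∈ c, K ⊆ Uo := by
        by_contra hc2
        push_neg at hc2
        set c' := (fun K => K \ Uo) '' c with hc'
        haveI : Nonempty ↥c' := by
          obtain ⟨K0, hK0⟩ := hcne
          exact ⟨⟨K0 \ Uo, ⟨K0, hK0, rfl⟩⟩⟩
        have hne' : (⋂₀ c').Nonempty := by
          apply IsCompact.nonempty_sInter_of_directed_nonempty_isCompact_isClosed
          · rintro _ ⟨K1, hK1, rfl⟩ _ ⟨K2, hK2, rfl⟩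
            rcases hch.total hK1 hK2 with h | h
            · exact ⟨K1 \ Uo, ⟨K1, hK1, rfl⟩, subset_rfl, Set.diff_subset_diff_left h⟩
            · exact ⟨K2 \ Uo, ⟨K2, hK2, rfl⟩, Set.diff_subset_diff_left h, subset_rfl⟩
          · rintro _ ⟨K1, hK1, rfl⟩
            exact Set.diff_nonempty.mpr (hc2 K1 hK1)
          · rintro _ ⟨K1, hK1, rfl⟩
            exact ((hcF hK1).2.1.sdiff hUo_open).isCompact
          · rintro _ ⟨K1, hK1, rfl⟩
            exact (hcF hK1).2.1.sdiff hUo_open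
        obtain ⟨w, hw⟩ := hne'
        have hwQ : w ∈ Q := by
          apply Set.mem_sInter.mpr
          intro K hK
          exact (Set.mem_sInter.mp hw (K \ Uo) ⟨K, hK, rfl⟩).1
        have hwU : w ∉ Uo := by
          obtain ⟨K0, hK0⟩ := hcne
          exact (Set.mem_sInter.mp hw (K0 \ Uo) ⟨K0, hK0, rfl⟩).2
        exact hwU (hQU hwQ)
      obtain ⟨K, hKc, hKUo⟩ := hKU
      obtain ⟨hKX, hKcl, hKinv, zap, hzapK, hzapAper⟩ := hcF hKc
      have hgood : ∀ u : ℤ × ℤ, Good Q s zap u := by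
        intro u
        have hmem : shift u zap ∈ Uo := hKUo (hKinv u _ hzapK)
        obtain ⟨z, hzQ, hagr⟩ := Set.mem_iUnion₂.mp hmem
        refine ⟨shift (-u) z, hQinv (-u) z hzQ, ?_⟩
        intro p hp
        have h1 : shift u zap (p - u) = z (p - u) := hagr (p - u) hp
        have h2 : shift u zap (p - u) = zap p := by
          rw [shift_apply]; congr 1; ring
        have h3 : shift (-u) z p = z (p - u) := by
          rw [shift_apply, sub_eq_add_neg]
        rw [← h2, h1, ← h3]
      obtain ⟨g, hgQ, hzapg⟩ := good_all_const hN hNall hNs hgood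
      have hNzap : Nper N zap := hzapg ▸ hNall g hgQ
      have h0 := hzapAper (N, 0) hNzap.1
      rw [Prod.ext_iff] at h0
      have : N = 0 := h0.1
      omega
  obtain ⟨M, -, hMmin⟩ := zorn_superset_nonempty F hchain X hXF
  obtain ⟨hMX, hMcl, hMinv, x, hxM, hxAper⟩ := hMmin.prop
  have hocM : oc x ⊆ M := oc_subset_of_closed hMcl hMinv hxM
  have hocF : oc x ∈ F :=
    ⟨hocM.trans hMX, oc_closed x, oc_inv x, x, x_mem_oc x, hxAper⟩
  have hMeq : M = oc x := subset_antisymm (hMmin.2 hocF hocM) hocM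
  have hxX : x ∈ X := hMX hxM
  have hoccnt : (oc x).Countable := hcnt.mono (hocM.trans hMX)
  have hYX : ocY x ⊆ X := fun w hw => (hocM.trans hMX) hw.1
  have hYcl := ocY_closed hoccnt
  have hYinv := ocY_inv x
  have hYnoAper : ∀ y ∈ ocY x, ¬ Aper y := by
    intro y hy hap
    have hocysub : oc y ⊆ M := (oc_subset_ocY hoccnt hy).trans
      (Set.diff_subset.trans hocM)
    have hocyF : oc y ∈ F :=
      ⟨hocysub.trans hMX, oc_closed y, oc_inv y, y, x_mem_oc y, hap⟩
    have hMeq2 : M ⊆ oc y := hMmin.2 hocyF hocysub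
    have hxY : x ∈ ocY x := (oc_subset_ocY hoccnt hy) (hMeq2 hxM)
    exact hxY.2 (x_mem_orbit x)
  have hYper : ∀ y ∈ ocY x, ∃ N : ℤ, 1 ≤ N ∧ Nper N y := by
    intro y hy
    rcases H y (hYX hy) with hap | h
    · exact absurd hap (hYnoAper y hy)
    · exact h
  have hYfin : (ocY x).Finite := by
    by_contra hYinf
    obtain ⟨z, hzY, hzap⟩ := INF H hYX hYcl hYinv hYinf
    exact hYnoAper z hzY hzap
  obtain ⟨N, hN, hNall⟩ := common_nper hYfin hYper
  set s : ℕ := N.toNat + 1 with hs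
  have hNs : (N : ℤ) + 1 ≤ (s : ℤ) := by rw [hs]; push_cast; omega
  have hBAD := coreA hoccnt hxAper s
  by_cases hBADempty : {u : ℤ × ℤ | ¬ Good (ocY x) s x u} = ∅
  · have hgood : ∀ u, Good (ocY x) s x u := by
      intro u
      by_contra hcon2
      rw [Set.eq_empty_iff_forall_notMem] at hBADempty
      exact hBADempty u hcon2
    obtain ⟨g, hgY, hxg⟩ := good_all_const hN hNall hNs hgood
    have hNx : Nper N x := hxg ▸ hNall g hgY
    have h0 := hxAper (N, 0) hNx.1
    rw [Prod.ext_iff] at h0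
    have : N = 0 := h0.1
    omega
  · set R : ℕ := hBAD.toFinset.sup nrm with hR
    have hboundR : ∀ u : ℤ × ℤ, R < nrm u → Good (ocY x) s x u := by
      intro u hu
      by_contra hcon2
      have h1 : u ∈ hBAD.toFinset := hBAD.mem_toFinset.mpr hcon2
      have h2 := Finset.le_sup (f := nrm) h1
      omega
    obtain ⟨g, hgY, hoff⟩ := good_off_const hN hNall hNs hboundR
    have hxneg : x ≠ g := by
      intro he
      have hNx : Nper N x := he ▸ hNall g hgY
      have h0 := hxAper (N, 0) hNx.1
      rw [Prod.ext_iff] at h0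
      have : N = 0 := h0.1
      omega
    exact coreC hS hcnt hxX hN (hNall g hgY) hoff hxneg

end Dev

theorem stmt11 {A : Type*} [Fintype A] [Nonempty A] [TopologicalSpace A] [DiscreteTopology A]
    (X : Set (Config A)) (hX : IsSFT X) (hcount : X.Countable) (hinf : X.Infinite) :
    ∃ c ∈ X, ∃ v : ℤ × ℤ, v ≠ 0 ∧ shift v c = c ∧
      ∀ w : ℤ × ℤ, shift w c = c → ¬ LinearIndependent ℤ ![v, w] := by
  classical
  obtain ⟨hXne, n, D, pt, hXeq⟩ := hX
  obtain ⟨r, hSW⟩ := isSFT_isSFTW hXeq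
  by_contra hcon
  push_neg at hcon
  have H : ∀ z ∈ X, Aper z ∨ ∃ N : ℤ, 1 ≤ N ∧ Nper N z := by
    intro z hz
    by_cases hap : Aper z
    · exact Or.inl hap
    · right
      simp only [Aper] at hap
      push_neg at hap
      obtain ⟨v, hv, hvne⟩ := hap
      obtain ⟨w, hw, hind⟩ := hcon z hz v hvne hv
      exact nper_of_indep hv hw hind
  exact main_false hSW hcount hinf H

end CountableSubshift
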